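/- Let n be a positive integer and let k and l be integers with gcd(n, k, l) = 1 satisfying condition (B): n ∣ k+l or n ∣ 2k−l or n ∣ 2l−k. Then the image of a³ is central in the group E_n(k,l) with presentation (a, x : a^n, x a^k x a^{l−k} x a^{−l}), and consequently the cube of the shift automorphism of G_n(k,l) is the identity: θ³ = 1 in Aut(G_n(k,l)). -/

import Mathlib

/-!
Put `x_i := a^i x a^{-i}` in `E_n(k,l)`, and `x_i` the `i`-th generator in `G_n(k,l)`. In both
groups `i ↦ x_i` is `n`-periodic with `x_i x_{i+k} x_{i+l} = 1`. Under (B) this relation becomes,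
after a cyclic rotation, `x_j x_{j+d} x_{j+2d} = 1` for `d = k` or `d = -l`; comparing it with its
shift by `d` gives `x_{j+3d} = x_j`. Together with `gcd(n,k,l) = 1`, (B) makes `d` coprime to
`n`, so the periods `n` and `3d` combine to the period `3`. Hence `a³` commutes with `x` and `θ³`
fixes every generator.
-/

namespace CPG

/-- The free group on generators `x_0, …, x_{n-1}` indexed by `ZMod n`. -/
abbrev FG (n : ℕ) := FreeGroup (ZMod n)

/-- The automorphism of the free group sending `x_j` to `x_{j+i}`. -/
def shiftA (n : ℕ) (i : ZMod n) : MulAut (FG n) :=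
  FreeGroup.freeGroupCongr (Equiv.addRight i)

/-- The shift automorphism `θ` of the free group, `x_j ↦ x_{j+1}`. -/
def shiftAut (n : ℕ) : MulAut (FG n) := shiftA n 1

/-- The `θ`-orbit of a word `w`: the relator set of the cyclic presentation `P_n(w)`. -/
def rels (n : ℕ) (w : FG n) : Set (FG n) := Set.range fun i : ZMod n => shiftA n i w

/-- The cyclically presented group `G_n(w)`. -/
abbrev Gp (n : ℕ) (w : FG n) := PresentedGroup (rels n w)

lemma shiftA_shiftA (n : ℕ) (i j : ZMod n) (x : FG n) :
    shiftA n i (shiftA n j x) = shiftA n (j + i) x := by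
  show FreeGroup.map _ (FreeGroup.map _ x) = FreeGroup.map _ x
  rw [FreeGroup.map.comp]
  have h : (⇑(Equiv.addRight i) ∘ ⇑(Equiv.addRight j)) = ⇑(Equiv.addRight (j + i)) := by
    funext z
    simp [add_assoc]
  rw [h]

lemma image_shiftAut_rels (n : ℕ) (w : FG n) :
    (shiftAut n) '' rels n w = rels n w := by
  ext r
  constructor
  · rintro ⟨s, ⟨i, rfl⟩, rfl⟩
    exact ⟨i + 1, (shiftA_shiftA n 1 i w).symm⟩
  · rintro ⟨i, rfl⟩
    refine ⟨shiftA n (i - 1) w, ⟨i - 1, rfl⟩, ?_⟩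
    rw [shiftAut, shiftA_shiftA, sub_add_cancel]

lemma map_normalClosure_rels (n : ℕ) (w : FG n) :
    (Subgroup.normalClosure (rels n w)).map (shiftAut n).toMonoidHom
      = Subgroup.normalClosure (rels n w) := by
  rw [Subgroup.map_normalClosure (rels n w) (shiftAut n).toMonoidHom (shiftAut n).surjective]
  congr 1
  exact image_shiftAut_rels n w

/-- The shift automorphism `θ` of the cyclically presented group `G_n(w)`. -/
def shiftG (n : ℕ) (w : FG n) : MulAut (Gp n w) :=
  QuotientGroup.congr (Subgroup.normalClosure (rels n w)) (Subgroup.normalClosure (rels n w))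
    (shiftAut n) (map_normalClosure_rels n w)

/-- The generator `x_k` (subscript mod `n`). -/
def xg (n : ℕ) (k : ℤ) : FG n := FreeGroup.of (k : ZMod n)

/-- The word `x_0 x_k x_l`. -/
def wkl (n : ℕ) (k l : ℤ) : FG n := xg n 0 * xg n k * xg n l

/-- The cyclically presented group `G_n(k,l) = G_n(x_0 x_k x_l)`. -/
abbrev Gkl (n : ℕ) (k l : ℤ) := Gp n (wkl n k l)

/-- The shift automorphism of `G_n(k,l)`. -/
def shiftKL (n : ℕ) (k l : ℤ) : MulAut (Gkl n k l) := shiftG n (wkl n k l)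

end CPG

namespace CPG

/-- The generator `a` of the free group on `{a, x}` (modeled on `Bool`, `a = of false`). -/
def ga : FreeGroup Bool := FreeGroup.of false

/-- The generator `x` of the free group on `{a, x}` (`x = of true`). -/
def gx : FreeGroup Bool := FreeGroup.of true

/-- The relator set of the presentation `(a, x : a^n, W)`. -/
def rels2 (n : ℕ) (W : FreeGroup Bool) : Set (FreeGroup Bool) := {ga ^ n, W}

/-- The group with presentation `(a, x : a^n, W)`. -/
abbrev E2 (n : ℕ) (W : FreeGroup Bool) := PresentedGroup (rels2 n W)

/-- The image of `a` in `(a, x : a^n, W)`. -/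
def a2 (n : ℕ) (W : FreeGroup Bool) : E2 n W := PresentedGroup.of false

/-- The image of `x` in `(a, x : a^n, W)`. -/
def x2 (n : ℕ) (W : FreeGroup Bool) : E2 n W := PresentedGroup.of true

/-- The relator set of `E_n(k,l) = (a, x : a^n, x a^k x a^(l-k) x a^(-l))`. -/
def relsE (n : ℕ) (k l : ℤ) : Set (FreeGroup Bool) :=
  {ga ^ n, gx * ga ^ k * gx * ga ^ (l - k) * gx * ga ^ (-l)}

/-- The group `E_n(k,l)` with presentation `(a, x : a^n, x a^k x a^(l-k) x a^(-l))`. -/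
abbrev Ekl (n : ℕ) (k l : ℤ) := PresentedGroup (relsE n k l)

/-- The image of `a` in `E_n(k,l)`. -/
def aE (n : ℕ) (k l : ℤ) : Ekl n k l := PresentedGroup.of false

/-- The image of `x` in `E_n(k,l)`. -/
def xE (n : ℕ) (k l : ℤ) : Ekl n k l := PresentedGroup.of true

end CPG

open Function

theorem Function.Periodic.eq_of_dvd_sub {α : Type*} {f : ℤ → α} {n x y : ℤ}
    (hf : Periodic f n) (h : n ∣ x - y) : f x = f y := by
  obtain ⟨c, hc⟩ := h
  rw [show x = y + c • n by rw [smul_eq_mul]; linarith, hf.zsmul c y]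

theorem Function.Periodic.of_isCoprime {α : Type*} {f : ℤ → α} {a b c : ℤ}
    (ha : Periodic f (c * a)) (hb : Periodic f (c * b)) (hab : IsCoprime a b) : Periodic f c := by
  obtain ⟨u, v, huv⟩ := hab
  have := (ha.zsmul u).add_period (hb.zsmul v)
  rwa [smul_eq_mul, smul_eq_mul, show u * (c * a) + v * (c * b) = c by linear_combination c * huv]
    at this

theorem Int.isCoprime_of_gcd_gcd_eq_one_of_dvd_sub {n k l c : ℤ}
    (hgcd : Int.gcd n (Int.gcd k l) = 1) (h : n ∣ l - c * k) : IsCoprime n k := by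
  obtain ⟨t, ht⟩ := h
  obtain ⟨u, v, huv⟩ := Int.isCoprime_iff_gcd_eq_one.mpr hgcd
  refine ⟨u + v * Int.gcdB k l * t, v * (Int.gcdA k l + Int.gcdB k l * c), ?_⟩
  linear_combination huv - v * Int.gcd_eq_gcd_ab k l - v * Int.gcdB k l * ht

theorem periodic_three_mul_of_mul_mul_eq_one {G : Type*} [Group G] {f : ℤ → G} {d : ℤ}
    (h : ∀ j, f j * f (j + d) * f (j + 2 * d) = 1) : Periodic f (3 * d) := by
  intro j
  have hrot : f (j + d) * f (j + 2 * d) * f j = 1 := by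
    rw [mul_eq_one_comm, ← mul_assoc, h]
  have hnext := h (j + d)
  rw [show j + d + d = j + 2 * d by ring, show j + d + 2 * d = j + 3 * d by ring] at hnext
  exact mul_left_cancel (hnext.trans hrot.symm)

theorem exists_isCoprime_forall_mul_mul_eq_one {G : Type*} [Group G] {f : ℤ → G} {n k l : ℤ}
    (hf : Periodic f n) (hrel : ∀ i, f i * f (i + k) * f (i + l) = 1)
    (hgcd : Int.gcd n (Int.gcd k l) = 1)
    (hB : n ∣ k + l ∨ n ∣ 2 * k - l ∨ n ∣ 2 * l - k) :
    ∃ d, IsCoprime n d ∧ ∀ j, f j * f (j + d) * f (j + 2 * d) = 1 := by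
  rcases hB with h | h | h
  · refine ⟨k, Int.isCoprime_of_gcd_gcd_eq_one_of_dvd_sub (c := -1) hgcd
      (by simpa [add_comm] using h), ?_⟩
    intro j
    have hj := hrel (j + k)
    rw [hf.eq_of_dvd_sub (x := j + k + l) (y := j) (by simpa [add_assoc] using h), mul_eq_one_comm,
      ← mul_assoc, add_assoc, ← two_mul] at hj
    exact hj
  · refine ⟨k, Int.isCoprime_of_gcd_gcd_eq_one_of_dvd_sub (c := 2) hgcd
      (by rw [← dvd_neg, neg_sub]; exact h), ?_⟩
    intro j
    rw [hf.eq_of_dvd_sub (x := j + 2 * k) (y := j + l) (by convert h using 1; ring)]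
    exact hrel j
  · have hl : IsCoprime n l := Int.isCoprime_of_gcd_gcd_eq_one_of_dvd_sub (c := 2)
      (by rwa [Int.gcd_comm l k]) (by rw [← dvd_neg, neg_sub]; exact h)
    refine ⟨-l, hl.neg_right, ?_⟩
    intro j
    have hj := hrel (j - 2 * l)
    rw [(hf.eq_of_dvd_sub (x := j) (y := j - 2 * l + k) (by convert h using 1; ring)).symm,
      mul_assoc, mul_eq_one_comm] at hj
    convert hj using 3 <;> congr 1 <;> ring

theorem periodic_three_of_mul_mul_eq_one {G : Type*} [Group G] {f : ℤ → G} {n k l : ℤ}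
    (hf : Periodic f n) (hrel : ∀ i, f i * f (i + k) * f (i + l) = 1)
    (hgcd : Int.gcd n (Int.gcd k l) = 1)
    (hB : n ∣ k + l ∨ n ∣ 2 * k - l ∨ n ∣ 2 * l - k) : Periodic f 3 := by
  obtain ⟨d, hnd, hd⟩ := exists_isCoprime_forall_mul_mul_eq_one hf hrel hgcd hB
  exact (hf.int_mul 3).of_isCoprime (periodic_three_mul_of_mul_mul_eq_one hd) hnd

theorem PresentedGroup.mem_center_of_forall_commute_of {α : Type*} {rels : Set (FreeGroup α)}
    {g : PresentedGroup rels} (h : ∀ x, Commute g (PresentedGroup.of x)) :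
    g ∈ Subgroup.center (PresentedGroup rels) := by
  rw [← Subgroup.centralizer_univ, ← Subgroup.coe_top, ← PresentedGroup.closure_range_of,
    Subgroup.centralizer_closure, Subgroup.mem_centralizer_iff]
  rintro _ ⟨x, rfl⟩
  exact (h x).symm.eq

namespace CPG

theorem aE_pow_three_mem_center {n : ℕ} {k l : ℤ} (hgcd : Int.gcd (n : ℤ) (Int.gcd k l) = 1)
    (hB : (n : ℤ) ∣ k + l ∨ (n : ℤ) ∣ 2 * k - l ∨ (n : ℤ) ∣ 2 * l - k) :
    aE n k l ^ 3 ∈ Subgroup.center (Ekl n k l) := by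
  set a := aE n k l
  set x := xE n k l
  have hmka : PresentedGroup.mk (relsE n k l) ga = a := rfl
  have hmkx : PresentedGroup.mk (relsE n k l) gx = x := rfl
  have ha : a ^ (n : ℤ) = 1 := by
    simpa [hmka] using PresentedGroup.one_of_mem (rels := relsE n k l) (Set.mem_insert _ _)
  have hx : x * a ^ k * x * a ^ (l - k) * x * a ^ (-l) = 1 := by
    simpa [hmka, hmkx] using
      PresentedGroup.one_of_mem (rels := relsE n k l) (Set.mem_insert_of_mem _ rfl)
  let f : ℤ → Ekl n k l := fun i => a ^ i * x * a ^ (-i)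
  have hf : Periodic f n := fun i => by simp [f, zpow_add, ha]
  have hrel : ∀ i, f i * f (i + k) * f (i + l) = 1 := fun i => by
    calc f i * f (i + k) * f (i + l)
        = a ^ i * (x * a ^ k * x * a ^ (l - k) * x * a ^ (-l)) * a ^ (-i) := by
          simp only [f]; group
      _ = 1 := by rw [hx, mul_one, zpow_neg, mul_inv_cancel]
  have h3 := periodic_three_of_mul_mul_eq_one hf hrel hgcd hB 0
  refine PresentedGroup.mem_center_of_forall_commute_of ?_
  rintro (_ | _)
  · exact (Commute.self_pow a 3).symm
  · exact show a ^ 3 * x = x * a ^ 3 by simpa [f, zpow_neg, mul_inv_eq_iff_eq_mul] using h3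

theorem shiftA_wkl (n : ℕ) (k l i : ℤ) :
    shiftA n i (wkl n k l) = xg n i * xg n (i + k) * xg n (i + l) := by
  simp [shiftA, wkl, xg, add_comm]

theorem shiftKL_of (n : ℕ) (k l : ℤ) (j : ZMod n) :
    shiftKL n k l (PresentedGroup.of j) = PresentedGroup.of (j + 1) :=
  rfl

theorem shiftKL_pow_three {n : ℕ} {k l : ℤ} (hgcd : Int.gcd (n : ℤ) (Int.gcd k l) = 1)
    (hB : (n : ℤ) ∣ k + l ∨ (n : ℤ) ∣ 2 * k - l ∨ (n : ℤ) ∣ 2 * l - k) :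
    shiftKL n k l ^ 3 = 1 := by
  let f : ℤ → Gkl n k l := fun i => PresentedGroup.mk _ (xg n i)
  have hf : Periodic f n := fun i => by simp [f, xg]
  have hrel : ∀ i, f i * f (i + k) * f (i + l) = 1 := fun i => by
    have : shiftA n i (wkl n k l) ∈ rels n (wkl n k l) := ⟨i, rfl⟩
    rw [shiftA_wkl] at this
    simpa only [map_mul] using PresentedGroup.one_of_mem this
  have h3 := periodic_three_of_mul_mul_eq_one hf hrel hgcd hB
  apply MulEquiv.toMonoidHom_injective
  refine PresentedGroup.ext fun j => ?_
  obtain ⟨i, rfl⟩ := ZMod.intCast_surjective j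
  simp only [MulEquiv.coe_toMonoidHom, pow_succ, pow_zero, MulAut.mul_apply, MulAut.one_apply,
    shiftKL_of]
  simpa [f, xg, PresentedGroup.of, add_assoc, one_add_one_eq_two, two_add_one_eq_three]
    using h3 i

end CPG

theorem statement8_general (n : ℕ) (k l : ℤ)
    (hgcd : Int.gcd (n : ℤ) (Int.gcd k l) = 1)
    (hB : (n : ℤ) ∣ (k + l) ∨ (n : ℤ) ∣ (2 * k - l) ∨ (n : ℤ) ∣ (2 * l - k)) :
    (CPG.aE n k l) ^ 3 ∈ Subgroup.center (CPG.Ekl n k l) ∧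
    (CPG.shiftKL n k l) ^ 3 = 1 :=
  ⟨CPG.aE_pow_three_mem_center hgcd hB, CPG.shiftKL_pow_three hgcd hB⟩

/-- Under condition (B) with `gcd(n,k,l) = 1`, the image of `a³` is central
in `E_n(k,l)` and the cube of the shift on `G_n(k,l)` is the identity. -/
theorem statement8 (n : ℕ) (hn : 0 < n) (k l : ℤ)
    (hgcd : Int.gcd (n : ℤ) (Int.gcd k l) = 1)
    (hB : (n : ℤ) ∣ (k + l) ∨ (n : ℤ) ∣ (2 * k - l) ∨ (n : ℤ) ∣ (2 * l - k)) :
    (CPG.aE n k l) ^ 3 ∈ Subgroup.center (CPG.Ekl n k l) ∧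
    (CPG.shiftKL n k l) ^ 3 = 1 :=
  statement8_general n k l hgcd hB
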